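/- For the strip P = {x ∈ ℝⁿ : |x₁| ≤ p} with p ≥ 0, one has ∫_P |x|₁ dλ_n(x) = n·(1 − e^{-p}) − p·e^{-p}; moreover λ_n(P) = 1 − e^{-p}, so this equals n − n·λ_n(Pᶜ) + λ_n(Pᶜ)·ln λ_n(Pᶜ), where Pᶜ = ℝⁿ \ P. -/

import Mathlib

open MeasureTheory Real Set

/-- The standard exponential measure `λ_n` on `ℝⁿ`, with density
`2⁻ⁿ exp(-|x|₁)` with respect to Lebesgue measure. -/
noncomputable def lamR (n : ℕ) : MeasureTheory.Measure (Fin n → ℝ) :=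
  MeasureTheory.volume.withDensity fun x =>
    ENNReal.ofReal (((2 : ℝ) ^ n)⁻¹ * Real.exp (-(∑ i, |x i|)))

/-!
Under `λ_n` the coordinates are independent with the Laplace law `ν(dt) = e^{-|t|}/2 dt`,
because the density factorises. The strip only constrains `x₁`, so the summand `|x₁|` contributes
`∫_{|t| ≤ p} |t| dν = 1 - (1 + p)e^{-p}`, and by independence each other summand `|x_i|`
contributes `ν([-p, p]) · ∫ |t| dν = 1 - e^{-p}`. Both one-dimensional integrals fold onto
`[0, ∞)` by symmetry, and `λ_n(Pᶜ) = e^{-p}` turns the result into the logarithmic form.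
-/

open ProbabilityTheory

theorem MeasureTheory.Measure.pi_withDensity_ofReal {ι : Type*} [Fintype ι] {α : ι → Type*}
    [∀ i, MeasurableSpace (α i)] (μ : ∀ i, Measure (α i)) [∀ i, SigmaFinite (μ i)]
    {f : ∀ i, α i → ℝ} (hf : ∀ i, Integrable (f i) (μ i)) (hf0 : ∀ i, 0 ≤ f i) :
    Measure.pi (fun i => (μ i).withDensity fun t => ENNReal.ofReal (f i t)) =
      (Measure.pi μ).withDensity fun x => ENNReal.ofReal (∏ i, f i (x i)) := by
  refine Measure.pi_eq fun s hs => ?_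
  have hbox : MeasurableSet (univ.pi s) := MeasurableSet.univ_pi hs
  have hind : (univ.pi s).indicator (fun x => ENNReal.ofReal (∏ i, f i (x i))) =
      fun x => ENNReal.ofReal (∏ i, (s i).indicator (f i) (x i)) := by
    ext x
    by_cases hx : x ∈ univ.pi s
    · rw [indicator_of_mem hx]
      congr 1
      exact Finset.prod_congr rfl fun i _ => (indicator_of_mem (hx i (mem_univ i)) _).symm
    · obtain ⟨i, hi⟩ : ∃ i, x i ∉ s i := by simpa [mem_univ_pi] using hx
      rw [indicator_of_notMem hx,
        Finset.prod_eq_zero (Finset.mem_univ i) (indicator_of_notMem hi _), ENNReal.ofReal_zero]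
  have hnonneg : ∀ i t, 0 ≤ (s i).indicator (f i) t := fun i => indicator_nonneg fun t _ => hf0 i t
  rw [withDensity_apply _ hbox, ← lintegral_indicator hbox, hind,
    ← ofReal_integral_eq_lintegral_ofReal
      (Integrable.fintype_prod_dep fun i => (hf i).indicator (hs i))
      (ae_of_all _ fun x => Finset.prod_nonneg fun i _ => hnonneg i (x i)),
    integral_fintype_prod_eq_prod,
    ENNReal.ofReal_prod_of_nonneg fun i _ => integral_nonneg (hnonneg i)]
  refine Finset.prod_congr rfl fun i _ => ?_
  rw [withDensity_apply _ (hs i), integral_indicator (hs i),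
    ofReal_integral_eq_lintegral_ofReal (hf i).integrableOn (ae_of_all _ (hf0 i))]

theorem setIntegral_pi_eval_mem_sum {ι α : Type*} [Fintype ι] [MeasurableSpace α]
    (μ : Measure α) [IsProbabilityMeasure μ] {s : Set α} (hs : MeasurableSet s) {f : α → ℝ}
    (hf : Integrable f μ) (i₀ : ι) :
    ∫ x in {x : ι → α | x i₀ ∈ s}, ∑ i, f (x i) ∂Measure.pi (fun _ => μ) =
      ∫ t in s, f t ∂μ + (Fintype.card ι - 1) * μ.real s * ∫ t, f t ∂μ := by
  classical
  have hS : MeasurableSet {x : ι → α | x i₀ ∈ s} := measurable_pi_apply i₀ hs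
  have hmap (j : ι) : (Measure.pi fun _ => μ).map (fun x => x j) = μ :=
    (measurePreserving_eval (fun _ => μ) j).map_eq
  have hcoord (i : ι) : ∫ x in {x : ι → α | x i₀ ∈ s}, f (x i) ∂Measure.pi (fun _ => μ) =
      if i = i₀ then ∫ t in s, f t ∂μ else μ.real s * ∫ t, f t ∂μ := by
    rw [← integral_indicator hS]
    split_ifs with h
    · subst h
      rw [← integral_indicator hs,
        ← integral_comp_eval (μ := fun _ : ι => μ) (i := i) (hf.indicator hs).aestronglyMeasurable]
      rfl
    · have hind : {x : ι → α | x i₀ ∈ s}.indicator (fun x => f (x i)) =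
          fun x => s.indicator 1 (x i₀) * f (x i) := by
        ext x; by_cases hx : x ∈ {x : ι → α | x i₀ ∈ s} <;> simp_all
      have hcoords : iIndepFun (fun i (x : ι → α) => x i) (Measure.pi fun _ => μ) :=
        iIndepFun_pi fun _ => aemeasurable_id
      rw [hind, (hcoords.indepFun (Ne.symm h)).integral_fun_comp_mul_comp
          (measurable_pi_apply i₀).aemeasurable (measurable_pi_apply i).aemeasurable
          (by rw [hmap]; exact (stronglyMeasurable_const.indicator hs).aestronglyMeasurable)
          (by rw [hmap]; exact hf.aestronglyMeasurable),
        integral_comp_eval (stronglyMeasurable_const.indicator hs).aestronglyMeasurable,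
        integral_comp_eval hf.aestronglyMeasurable, integral_indicator_one hs]
  have hint (i : ι) : Integrable (fun x : ι → α => f (x i)) (Measure.pi fun _ => μ) :=
    integrable_comp_eval hf
  rw [integral_finsetSum _ fun i _ => (hint i).integrableOn, Fintype.sum_eq_add_sum_compl i₀,
    hcoord, if_pos rfl, Finset.sum_congr rfl fun i hi => (hcoord i).trans
      (if_neg (Finset.mem_compl.1 hi ∘ Finset.mem_singleton.2)),
    Finset.sum_const, Finset.card_compl, Finset.card_singleton, nsmul_eq_mul,
    Nat.cast_sub (Fintype.card_pos_iff.2 ⟨i₀⟩), Nat.cast_one, mul_assoc]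

theorem integrable_comp_abs_of_integrableOn_Ioi {f : ℝ → ℝ} (hf : IntegrableOn f (Ioi 0)) :
    Integrable fun x => f |x| := by
  have hpos : IntegrableOn (fun x => f |x|) (Ioi 0) :=
    hf.congr_fun (fun x hx => by rw [abs_of_pos hx]) measurableSet_Ioi
  have hnonneg : IntegrableOn (fun x => f |x|) (Ici (-0)) := by
    rw [neg_zero]
    exact (integrableOn_Ici_iff_integrableOn_Ioi enorm_ne_top).2 hpos
  have hneg : IntegrableOn (fun x => f |x|) (Iic 0) := by
    simpa only [abs_neg] using hnonneg.comp_neg_Iic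
  rw [← integrableOn_univ, ← Iic_union_Ioi (a := (0 : ℝ))]
  exact hneg.union hpos

lemma integral_exp_neg_from_zero (p : ℝ) : ∫ t in (0 : ℝ)..p, exp (-t) = 1 - exp (-p) := by
  simp [intervalIntegral.integral_comp_neg fun t => exp t]

lemma integral_mul_exp_neg_from_zero (p : ℝ) :
    ∫ t in (0 : ℝ)..p, t * exp (-t) = 1 - (p + 1) * exp (-p) := by
  have hderiv (t : ℝ) : HasDerivAt (fun t => -(t + 1) * exp (-t)) (t * exp (-t)) t := by
    have := (((hasDerivAt_id t).add_const 1).neg).mul (hasDerivAt_neg t).exp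
    exact this.congr_deriv (by simp only [id, Pi.neg_apply]; ring)
  rw [intervalIntegral.integral_eq_sub_of_hasDerivAt (fun t _ => hderiv t)
    ((by fun_prop : Continuous fun t : ℝ => t * exp (-t)).intervalIntegrable _ _)]
  simp only [neg_add_rev, zero_add, neg_zero, exp_zero, mul_one, sub_neg_eq_add]
  ring

lemma integral_mul_exp_neg_Ioi_zero : ∫ t in Ioi (0 : ℝ), t * exp (-t) = 1 := by
  rw [← Gamma_two, Gamma_eq_integral two_pos]
  refine setIntegral_congr_fun measurableSet_Ioi fun t _ => ?_
  rw [show (2 : ℝ) - 1 = 1 by norm_num, rpow_one, mul_comm]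

noncomputable def laplacePDFReal (t : ℝ) : ℝ := 2⁻¹ * exp (-|t|)

noncomputable def laplaceReal : Measure ℝ :=
  volume.withDensity fun t => ENNReal.ofReal (laplacePDFReal t)

lemma laplacePDFReal_nonneg : 0 ≤ laplacePDFReal := fun t => by unfold laplacePDFReal; positivity

lemma integrable_laplacePDFReal : Integrable laplacePDFReal :=
  (integrable_comp_abs_of_integrableOn_Ioi (f := fun t => exp (-t))
    (by simpa using exp_neg_integrableOn_Ioi 0 one_pos)).const_mul 2⁻¹

lemma measurable_laplacePDFReal : Measurable laplacePDFReal := by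
  unfold laplacePDFReal; fun_prop

lemma integral_laplaceReal (f : ℝ → ℝ) : ∫ t, f t ∂laplaceReal = ∫ t, laplacePDFReal t * f t := by
  rw [laplaceReal, integral_withDensity_eq_integral_toReal_smul
    measurable_laplacePDFReal.ennreal_ofReal (ae_of_all _ fun _ => ENNReal.ofReal_lt_top)]
  simp_rw [ENNReal.toReal_ofReal (laplacePDFReal_nonneg _), smul_eq_mul]

lemma laplacePDFReal_mul_comp_abs (g : ℝ → ℝ) :
    (fun t => laplacePDFReal t * g |t|) = fun t => (fun s => 2⁻¹ * (g s * exp (-s))) |t| := by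
  ext t; simp only [laplacePDFReal]; ring

lemma integral_laplaceReal_comp_abs (g : ℝ → ℝ) :
    ∫ t, g |t| ∂laplaceReal = ∫ t in Ioi 0, g t * exp (-t) := by
  rw [integral_laplaceReal, laplacePDFReal_mul_comp_abs,
    integral_comp_abs (f := fun s => 2⁻¹ * (g s * exp (-s))), integral_const_mul]
  ring

lemma integrable_laplaceReal_comp_abs {g : ℝ → ℝ}
    (hg : IntegrableOn (fun t => g t * exp (-t)) (Ioi 0)) :
    Integrable (fun t => g |t|) laplaceReal := by
  rw [laplaceReal, integrable_withDensity_iff_integrable_smul'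
    measurable_laplacePDFReal.ennreal_ofReal (ae_of_all _ fun _ => ENNReal.ofReal_lt_top)]
  simp_rw [ENNReal.toReal_ofReal (laplacePDFReal_nonneg _), smul_eq_mul]
  rw [laplacePDFReal_mul_comp_abs]
  exact integrable_comp_abs_of_integrableOn_Ioi (hg.const_mul 2⁻¹)

lemma integral_laplacePDFReal : ∫ t, laplacePDFReal t = 1 := by
  have h := integral_laplaceReal_comp_abs fun _ => 1
  simpa only [integral_laplaceReal, mul_one, one_mul, integral_exp_neg_Ioi_zero] using h

instance : IsProbabilityMeasure laplaceReal := by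
  constructor
  rw [laplaceReal, withDensity_apply _ MeasurableSet.univ, Measure.restrict_univ,
    ← ofReal_integral_eq_lintegral_ofReal integrable_laplacePDFReal
      (ae_of_all _ laplacePDFReal_nonneg), integral_laplacePDFReal, ENNReal.ofReal_one]

lemma integrable_abs_laplaceReal : Integrable (fun t => |t|) laplaceReal :=
  integrable_laplaceReal_comp_abs (g := fun t => t) ((GammaIntegral_convergent two_pos).congr_fun
    (fun t _ => by norm_num [mul_comm]) measurableSet_Ioi)

lemma integral_abs_laplaceReal : ∫ t, |t| ∂laplaceReal = 1 := by
  rw [integral_laplaceReal_comp_abs (fun t => t), integral_mul_exp_neg_Ioi_zero]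

lemma setIntegral_abs_le_laplaceReal_comp_abs (g : ℝ → ℝ) {p : ℝ} (hp : 0 ≤ p) :
    ∫ t in {t | |t| ≤ p}, g |t| ∂laplaceReal = ∫ t in 0..p, g t * exp (-t) := by
  have hset : MeasurableSet {t : ℝ | |t| ≤ p} := measurableSet_le (by fun_prop) (by fun_prop)
  rw [← integral_indicator hset]
  have hind : {t : ℝ | |t| ≤ p}.indicator (fun t => g |t|) = fun t => (Iic p).indicator g |t| := by
    ext t; by_cases ht : |t| ≤ p <;> simp [ht, indicator]
  have hmul : (fun t => (Iic p).indicator g t * exp (-t)) =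
      (Iic p).indicator fun t => g t * exp (-t) := by
    ext t; exact (indicator_mul_left (Iic p) g (fun t => exp (-t))).symm
  rw [hind, integral_laplaceReal_comp_abs, hmul, setIntegral_indicator measurableSet_Iic,
    Ioi_inter_Iic, intervalIntegral.integral_of_le hp]

lemma laplaceReal_setOf_abs_le {p : ℝ} (hp : 0 ≤ p) :
    laplaceReal {t | |t| ≤ p} = ENNReal.ofReal (1 - exp (-p)) := by
  have h := setIntegral_abs_le_laplaceReal_comp_abs (fun _ => 1) hp
  simp only [setIntegral_const, smul_eq_mul, mul_one, one_mul, integral_exp_neg_from_zero] at h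
  rw [← h, measureReal_def, ENNReal.ofReal_toReal (measure_ne_top _ _)]

lemma setIntegral_abs_le_laplaceReal_abs {p : ℝ} (hp : 0 ≤ p) :
    ∫ t in {t | |t| ≤ p}, |t| ∂laplaceReal = 1 - exp (-p) - p * exp (-p) := by
  rw [setIntegral_abs_le_laplaceReal_comp_abs (fun t => t) hp, integral_mul_exp_neg_from_zero]
  ring

theorem lamR_eq_pi (n : ℕ) : lamR n = Measure.pi fun _ => laplaceReal := by
  rw [laplaceReal, Measure.pi_withDensity_ofReal _ (fun _ => integrable_laplacePDFReal)
    (fun _ => laplacePDFReal_nonneg), ← volume_pi, lamR]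
  congr with x
  simp [laplacePDFReal, Finset.prod_mul_distrib, ← exp_sum, Finset.sum_neg_distrib]

instance (n : ℕ) : IsProbabilityMeasure (lamR n) := by
  rw [lamR_eq_pi]
  infer_instance

/-- The first absolute moment of `λ_n` over the strip `P = {x : |x₁| ≤ p}`:
`∫_P |x|₁ dλ_n = n(1 - e^(-p)) - p·e^(-p)`; moreover `λ_n(P) = 1 - e^(-p)`, so
this equals `n - n·λ_n(Pᶜ) + λ_n(Pᶜ)·ln λ_n(Pᶜ)`. -/
theorem strip_moment_eq
    (n : ℕ) (hn : 0 < n) (p : ℝ) (hp : 0 ≤ p) :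
    (∫ x in {x : Fin n → ℝ | |x ⟨0, hn⟩| ≤ p}, ∑ i, |x i| ∂(lamR n) =
        n * (1 - Real.exp (-p)) - p * Real.exp (-p)) ∧
      lamR n {x : Fin n → ℝ | |x ⟨0, hn⟩| ≤ p} = ENNReal.ofReal (1 - Real.exp (-p)) ∧
      ∫ x in {x : Fin n → ℝ | |x ⟨0, hn⟩| ≤ p}, ∑ i, |x i| ∂(lamR n) =
        n - n * (lamR n {x : Fin n → ℝ | |x ⟨0, hn⟩| ≤ p}ᶜ).toReal +
          (lamR n {x : Fin n → ℝ | |x ⟨0, hn⟩| ≤ p}ᶜ).toReal *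
            Real.log (lamR n {x : Fin n → ℝ | |x ⟨0, hn⟩| ≤ p}ᶜ).toReal := by
  have hI : MeasurableSet {t : ℝ | |t| ≤ p} := measurableSet_le (by fun_prop) (by fun_prop)
  have hstrip : MeasurableSet {x : Fin n → ℝ | |x ⟨0, hn⟩| ≤ p} :=
    measurableSet_le (by fun_prop) (by fun_prop)
  have hexp : 0 ≤ 1 - exp (-p) := sub_nonneg.2 (exp_le_one_iff.2 (neg_nonpos.2 hp))
  have hmoment : ∫ x in {x : Fin n → ℝ | |x ⟨0, hn⟩| ≤ p}, ∑ i, |x i| ∂(lamR n) =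
      n * (1 - exp (-p)) - p * exp (-p) := by
    rw [lamR_eq_pi]
    refine (setIntegral_pi_eval_mem_sum laplaceReal hI integrable_abs_laplaceReal _).trans ?_
    rw [setIntegral_abs_le_laplaceReal_abs hp, integral_abs_laplaceReal, measureReal_def,
      laplaceReal_setOf_abs_le hp, ENNReal.toReal_ofReal hexp, Fintype.card_fin]
    ring
  have hmass : lamR n {x : Fin n → ℝ | |x ⟨0, hn⟩| ≤ p} = ENNReal.ofReal (1 - exp (-p)) := by
    rw [lamR_eq_pi, ← laplaceReal_setOf_abs_le hp]
    exact (measurePreserving_eval (fun _ => laplaceReal) _).measure_preimage hI.nullMeasurableSet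
  have hcompl : (lamR n {x : Fin n → ℝ | |x ⟨0, hn⟩| ≤ p}ᶜ).toReal = exp (-p) := by
    rw [← measureReal_def, probReal_compl_eq_one_sub hstrip, measureReal_def, hmass,
      ENNReal.toReal_ofReal hexp]
    ring
  refine ⟨hmoment, hmass, ?_⟩
  rw [hmoment, hcompl, log_exp]
  ring
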